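/- Assume the event T_α holds for some 0 < α < 1 and λ0 > 0. Let S ⊆ {1,…,p} with ‖b^S‖₁ > 0, and choose the tuning parameter λ := λ0^{2/(1+α)} · ‖b^S‖₁^{−(1−α)/(1+α)}. Then ‖f̂ − f⁰‖_n² + λ‖β̂ − b^S‖₁ ≤ (21/2)·λ0^{2/(1+α)}·‖b^S‖₁^{2α/(1+α)} + 7‖ff_S − f⁰‖_n². -/
import Mathlib


open Finset

noncomputable section

/-- Squared normalized norm: `‖v‖ₙ² = ‖v‖₂²/n`. -/
def nsq (n : ℕ) (v : Fin n → ℝ) : ℝ := (∑ i, v i ^ 2) / n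

/-- Normalized norm `‖v‖ₙ`. -/
def nnorm (n : ℕ) (v : Fin n → ℝ) : ℝ := Real.sqrt (nsq n v)

/-- `ℓ₁`-norm of a coefficient vector. -/
def l1 {p : ℕ} (β : Fin p → ℝ) : ℝ := ∑ j, |β j|

/-- `f_β := ∑ⱼ βⱼ ψⱼ`. -/
def fvec {n p : ℕ} (ψ : Fin p → Fin n → ℝ) (β : Fin p → ℝ) : Fin n → ℝ :=
  fun i => ∑ j, β j * ψ j i

/-- Restriction `β_S` of `β` to an index set `S`. -/
def restr {p : ℕ} (S : Finset (Fin p)) (β : Fin p → ℝ) : Fin p → ℝ :=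
  fun j => if j ∈ S then β j else 0

/-- Compatibility constant `φ²(L,S)`. -/
def phiSq {n p : ℕ} (ψ : Fin p → Fin n → ℝ) (L : ℝ) (S : Finset (Fin p)) : ℝ :=
  sInf {x : ℝ | ∃ β : Fin p → ℝ, l1 (restr S β) = 1 ∧ l1 (β - restr S β) ≤ L ∧
    x = S.card * nsq n (fvec ψ (restr S β) - fvec ψ (β - restr S β))}

/-- Covering number `N(δ, F, ‖·‖ₙ)`. -/
def covN (n : ℕ) (δ : ℝ) (F : Set (Fin n → ℝ)) : ℕ :=
  sInf {N : ℕ | ∃ g : Fin N → (Fin n → ℝ), ∀ f ∈ F, ∃ k, nnorm n (f - g k) ≤ δ}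

lemma fvec_sub' {n p : ℕ} (ψ : Fin p → Fin n → ℝ) (a b : Fin p → ℝ) (i : Fin n) :
    fvec ψ (a - b) i = fvec ψ a i - fvec ψ b i := by
  simp [fvec, sub_mul, Finset.sum_sub_distrib]

lemma nsq_nonneg' (n : ℕ) (v : Fin n → ℝ) : 0 ≤ nsq n v :=
  div_nonneg (Finset.sum_nonneg fun i _ => sq_nonneg _) (Nat.cast_nonneg n)

set_option maxHeartbeats 1000000 in
theorem stmt4 {n p : ℕ} (hn : 1 ≤ n) (hp : 1 ≤ p)
    (ψ : Fin p → Fin n → ℝ) (hψ : ∀ j, ∑ i, (ψ j i) ^ 2 ≤ (n : ℝ))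
    (β0 : Fin p → ℝ) (ε : Fin n → ℝ)
    (α lam0 lam : ℝ) (hα0 : 0 < α) (hα1 : α < 1) (hlam0 : 0 < lam0)
    (S : Finset (Fin p))
    (bS : Fin p → ℝ) (hbS_supp : ∀ j, j ∉ S → bS j = 0)
    (hbS_proj : ∀ b : Fin p → ℝ, (∀ j, j ∉ S → b j = 0) →
      nsq n (fvec ψ bS - fvec ψ β0) ≤ nsq n (fvec ψ b - fvec ψ β0))
    (hbSpos : 0 < l1 bS)
    (hlam : lam = lam0 ^ (2 / (1 + α)) * l1 bS ^ (-(1 - α) / (1 + α)))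
    (hT : ∀ β : Fin p → ℝ,
      4 * |∑ i, ε i * fvec ψ β i| / n ≤
        lam0 * nnorm n (fvec ψ β) ^ (1 - α) * l1 β ^ α)
    (hatβ : Fin p → ℝ)
    (hmin : ∀ β : Fin p → ℝ,
      (∑ i, (fvec ψ β0 i + ε i - fvec ψ hatβ i) ^ 2) / n + lam * l1 hatβ ≤
        (∑ i, (fvec ψ β0 i + ε i - fvec ψ β i) ^ 2) / n + lam * l1 β)
 :
    nsq n (fvec ψ hatβ - fvec ψ β0) + lam * l1 (hatβ - bS) ≤
      (21 / 2) * lam0 ^ (2 / (1 + α)) * l1 bS ^ (2 * α / (1 + α))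
        + 7 * nsq n (fvec ψ bS - fvec ψ β0) := by
  have hn' : (0:ℝ) < n := by exact_mod_cast hn
  have h1α : (0:ℝ) < 1 + α := by linarith
  -- abbreviations
  set τ : ℝ := nsq n (fvec ψ hatβ - fvec ψ β0) with hτ
  set R : ℝ := nsq n (fvec ψ bS - fvec ψ β0) with hR
  set D : ℝ := l1 (hatβ - bS) with hD
  set M : ℝ := l1 bS with hM
  set P : ℝ := nsq n (fvec ψ (hatβ - bS)) with hP
  set K : ℝ := lam0 ^ (2 / (1 + α)) with hK
  set E : ℝ := ∑ i, ε i * fvec ψ (hatβ - bS) i with hE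
  have hPnn : 0 ≤ P := nsq_nonneg' n _
  have hDnn : 0 ≤ D := Finset.sum_nonneg fun j _ => abs_nonneg _
  have hKpos : 0 < K := Real.rpow_pos_of_pos hlam0 _
  have hlampos : 0 < lam := by
    rw [hlam]; exact mul_pos (Real.rpow_pos_of_pos hlam0 _) (Real.rpow_pos_of_pos hbSpos _)
  have hRnn : 0 ≤ R := nsq_nonneg' n _
  have hDθnn : 0 ≤ D ^ (2 * α / (1 + α)) := Real.rpow_nonneg hDnn _
  -- basic inequality
  have key : ∀ g : Fin n → ℝ, ∑ i, (fvec ψ β0 i + ε i - g i) ^ 2 =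
      ∑ i, (g i - fvec ψ β0 i) ^ 2 - 2 * ∑ i, ε i * (g i - fvec ψ β0 i) + ∑ i, (ε i) ^ 2 := by
    intro g
    rw [Finset.mul_sum, ← Finset.sum_sub_distrib, ← Finset.sum_add_distrib]
    exact Finset.sum_congr rfl fun i _ => by ring
  have hEsplit : E = (∑ i, ε i * (fvec ψ hatβ i - fvec ψ β0 i)) -
      ∑ i, ε i * (fvec ψ bS i - fvec ψ β0 i) := by
    rw [hE, ← Finset.sum_sub_distrib]
    exact Finset.sum_congr rfl fun i _ => by rw [fvec_sub']; ring
  have h1 : τ + lam * l1 hatβ ≤ R + lam * M + 2 * E / n := by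
    have hm := hmin bS
    rw [key (fvec ψ hatβ), key (fvec ψ bS)] at hm
    have hτ' : τ = (∑ i, (fvec ψ hatβ i - fvec ψ β0 i) ^ 2) / n := by
      rw [hτ]; simp [nsq]
    have hR' : R = (∑ i, (fvec ψ bS i - fvec ψ β0 i) ^ 2) / n := by
      rw [hR]; simp [nsq]
    rw [hτ', hR']
    simp only [add_div, sub_div] at hm
    have h2E : 2 * E / n = (2 * ∑ i, ε i * (fvec ψ hatβ i - fvec ψ β0 i)) / n
        - (2 * ∑ i, ε i * (fvec ψ bS i - fvec ψ β0 i)) / n := by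
      rw [hEsplit, mul_sub, sub_div]
    rw [h2E]
    linarith [hm]
  -- empirical process bound
  have h2 : 2 * E / n ≤ lam0 * nnorm n (fvec ψ (hatβ - bS)) ^ (1 - α) * D ^ α / 2 := by
    have h := hT (hatβ - bS)
    have habs : 2 * E / n ≤ 2 * |E| / n := by
      apply div_le_div_of_nonneg_right ?_ hn'.le
      have := le_abs_self E; linarith
    rw [hE] at habs
    rw [hD]
    calc 2 * E / n ≤ 2 * |∑ i, ε i * fvec ψ (hatβ - bS) i| / n := by rw [hE]; exact habs
      _ = (4 * |∑ i, ε i * fvec ψ (hatβ - bS) i| / n) / 2 := by ring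
      _ ≤ _ := by linarith
  -- rewrite the nnorm power
  have hnnP : nnorm n (fvec ψ (hatβ - bS)) ^ (1 - α) = P ^ ((1 - α) / 2) := by
    rw [nnorm, ← hP, Real.sqrt_eq_rpow, ← Real.rpow_mul hPnn]
    congr 1; ring
  -- first AM-GM : lam0 * P^((1-α)/2) * D^α ≤ P/2 + K * D^θ
  have hKD2 : (K * D ^ (2 * α / (1 + α))) ^ ((1 + α) / 2) = lam0 * D ^ α := by
    rw [Real.mul_rpow hKpos.le hDθnn, hK, ← Real.rpow_mul hlam0.le, ← Real.rpow_mul hDnn]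
    rw [show 2 / (1 + α) * ((1 + α) / 2) = 1 by field_simp,
        show 2 * α / (1 + α) * ((1 + α) / 2) = α by field_simp,
        Real.rpow_one]
  have hgeom1 := Real.geom_mean_le_arith_mean2_weighted
      (by linarith : (0:ℝ) ≤ (1 - α) / 2) (by linarith : (0:ℝ) ≤ (1 + α) / 2)
      hPnn (mul_nonneg hKpos.le hDθnn) (by ring)
  rw [hKD2] at hgeom1
  have h3 : lam0 * nnorm n (fvec ψ (hatβ - bS)) ^ (1 - α) * D ^ α ≤
      (1/2) * P + K * D ^ (2 * α / (1 + α)) := by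
    rw [hnnP]
    have e1 : 0 ≤ α * P := mul_nonneg hα0.le hPnn
    have e2 : 0 ≤ (1 - α) * (K * D ^ (2 * α / (1 + α))) :=
      mul_nonneg (by linarith) (mul_nonneg hKpos.le hDθnn)
    nlinarith [hgeom1]
  -- P ≤ 2τ + 2R
  have h4 : P ≤ 2 * τ + 2 * R := by
    have hpt : ∀ i : Fin n, (fvec ψ (hatβ - bS) i) ^ 2 ≤
        2 * (fvec ψ hatβ i - fvec ψ β0 i) ^ 2 + 2 * (fvec ψ bS i - fvec ψ β0 i) ^ 2 := by
      intro i
      rw [fvec_sub']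
      nlinarith [sq_nonneg ((fvec ψ hatβ i - fvec ψ β0 i) + (fvec ψ bS i - fvec ψ β0 i))]
    have hsum : ∑ i, (fvec ψ (hatβ - bS) i) ^ 2 ≤
        ∑ i, (2 * (fvec ψ hatβ i - fvec ψ β0 i) ^ 2 + 2 * (fvec ψ bS i - fvec ψ β0 i) ^ 2) :=
      Finset.sum_le_sum fun i _ => hpt i
    have hP' : P = (∑ i, (fvec ψ (hatβ - bS) i) ^ 2) / n := by rw [hP]; simp [nsq]
    have hτ' : τ = (∑ i, (fvec ψ hatβ i - fvec ψ β0 i) ^ 2) / n := by rw [hτ]; simp [nsq]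
    have hR' : R = (∑ i, (fvec ψ bS i - fvec ψ β0 i) ^ 2) / n := by rw [hR]; simp [nsq]
    rw [Finset.sum_add_distrib, ← Finset.mul_sum, ← Finset.mul_sum] at hsum
    rw [hP', hτ', hR',
      show 2 * ((∑ i, (fvec ψ hatβ i - fvec ψ β0 i) ^ 2) / (n:ℝ)) +
          2 * ((∑ i, (fvec ψ bS i - fvec ψ β0 i) ^ 2) / (n:ℝ)) =
        (2 * ∑ i, (fvec ψ hatβ i - fvec ψ β0 i) ^ 2 +
          2 * ∑ i, (fvec ψ bS i - fvec ψ β0 i) ^ 2) / (n:ℝ) by ring]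
    exact div_le_div_of_nonneg_right hsum hn'.le
  -- second AM-GM : K * D^θ ≤ lam * (θ D + (1-θ) M)
  have hMcancel : M ^ (-(1 - α) / (1 + α)) * M ^ ((1 - α) / (1 + α)) = 1 := by
    rw [← Real.rpow_add hbSpos, show -(1 - α) / (1 + α) + (1 - α) / (1 + α) = 0 by ring,
        Real.rpow_zero]
  have hθ : (0:ℝ) ≤ 2 * α / (1 + α) := by positivity
  have hθ' : (0:ℝ) ≤ (1 - α) / (1 + α) := by
    apply div_nonneg <;> linarith
  have hgeom2 := Real.geom_mean_le_arith_mean2_weighted hθ hθ' hDnn hbSpos.le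
      (by field_simp; ring)
  have h5eq : lam * (D ^ (2 * α / (1 + α)) * M ^ ((1 - α) / (1 + α))) =
      K * D ^ (2 * α / (1 + α)) := by
    rw [hlam]
    linear_combination K * D ^ (2 * α / (1 + α)) * hMcancel
  have h5 : K * D ^ (2 * α / (1 + α)) ≤
      lam * (2 * α / (1 + α) * D + (1 - α) / (1 + α) * M) := by
    rw [← h5eq]
    exact mul_le_mul_of_nonneg_left hgeom2 hlampos.le
  -- lam * M = K * M^θ
  have hstep : M ^ (-(1 - α) / (1 + α)) * M = M ^ (2 * α / (1 + α)) := by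
    have h := Real.rpow_add hbSpos (-(1 - α) / (1 + α)) 1
    rw [Real.rpow_one] at h
    rw [← h, show -(1 - α) / (1 + α) + 1 = 2 * α / (1 + α) by field_simp; ring]
  have h7 : lam * M = K * M ^ (2 * α / (1 + α)) := by
    rw [hlam, mul_assoc, hstep]
  -- l1 triangle
  have h6 : D ≤ l1 hatβ + M := by
    rw [hD, hM, l1, l1, l1, ← Finset.sum_add_distrib]
    apply Finset.sum_le_sum
    intro j _
    have : |(hatβ - bS) j| = |hatβ j - bS j| := rfl
    rw [this, sub_eq_add_neg]
    exact (abs_add_le _ _).trans (by rw [abs_neg])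
  have h6' : lam * D ≤ lam * l1 hatβ + lam * M := by
    nlinarith [mul_le_mul_of_nonneg_left h6 hlampos.le]
  -- θ bounds
  have hθle : 2 * α / (1 + α) ≤ 1 := by
    rw [div_le_one h1α]; linarith
  have h8 : 2 * α / (1 + α) * (lam * D) ≤ lam * D := by
    have : 0 ≤ lam * D := mul_nonneg hlampos.le hDnn
    nlinarith
  have hfrac : (1 - α) / (1 + α) ≤ 1 := by
    rw [div_le_one h1α]; linarith
  have hΛnn : 0 ≤ K * M ^ (2 * α / (1 + α)) :=
    mul_nonneg hKpos.le (Real.rpow_nonneg hbSpos.le _)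
  -- combine everything
  have h5' : K * D ^ (2 * α / (1 + α)) ≤
      2 * α / (1 + α) * (lam * D) + (1 - α) / (1 + α) * (lam * M) := by
    nlinarith [h5]
  have hfracM : (1 - α) / (1 + α) * (lam * M) ≤ lam * M := by
    have : 0 ≤ lam * M := mul_nonneg hlampos.le hbSpos.le
    nlinarith
  linarith [h1, h2, h3, h4, h5', h6', h7, h8, hfracM, hΛnn, hRnn]
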